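/- For every n ≥ 1, the polynomial identity t^{2n-1} + ∑_{i=0}^{n-1} ((2n-1)/(2i+1)) · C(n+i-1, 2i) · t^{n-i-1} (1-t)^{2i+1} = 1 holds for all real t. -/
import Mathlib

noncomputable def Wfn (s q : ℝ) (m : ℕ) : ℝ :=
  ∑ j ∈ Finset.range (m + 1), (-1:ℝ)^j * ((m - j).choose j : ℝ) * s^(m - 2*j) * q^j

lemma Wrec (m : ℕ) (s q : ℝ) : Wfn s q (m+2) = s * Wfn s q (m+1) - q * Wfn s q m := by
  unfold Wfn
  rw [Finset.mul_sum, Finset.mul_sum]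
  rw [Finset.sum_range_succ' (fun j => (-1:ℝ)^j * ((m+2 - j).choose j : ℝ) * s^(m+2 - 2*j) * q^j) (m+2)]
  rw [Finset.sum_range_succ' (fun j => s * ((-1:ℝ)^j * ((m+1 - j).choose j : ℝ) * s^(m+1 - 2*j) * q^j)) (m+1)]
  rw [Finset.sum_range_succ (fun j => (-1:ℝ)^(j+1) * ((m+2 - (j+1)).choose (j+1) : ℝ) * s^(m+2 - 2*(j+1)) * q^(j+1)) (m+1)]
  have htop : (-1:ℝ)^(m+1+1) * ((m+2 - (m+1+1)).choose (m+1+1) : ℝ) * s^(m+2 - 2*(m+1+1)) * q^(m+1+1) = 0 := by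
    rw [show m+2-(m+1+1) = 0 from by omega, Nat.choose_eq_zero_of_lt (by omega)]
    simp
  rw [htop]
  have hsum : ∑ j ∈ Finset.range (m+1),
      (-1:ℝ)^(j+1) * ((m+2 - (j+1)).choose (j+1) : ℝ) * s^(m+2 - 2*(j+1)) * q^(j+1)
    = ∑ j ∈ Finset.range (m+1),
      (s * ((-1:ℝ)^(j+1) * ((m+1 - (j+1)).choose (j+1) : ℝ) * s^(m+1 - 2*(j+1)) * q^(j+1))
        - q * ((-1:ℝ)^j * ((m - j).choose j : ℝ) * s^(m - 2*j) * q^j)) := by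
    refine Finset.sum_congr rfl ?_
    intro j hj
    have hjm : j ≤ m := by simpa using Nat.lt_succ_iff.mp (Finset.mem_range.mp hj)
    rw [show m+2-(j+1) = (m-j)+1 from by omega, show m+1-(j+1) = m - j from by omega,
        show m+2-2*(j+1) = m - 2*j from by omega,
        Nat.choose_succ_succ (m-j) j]
    rcases Nat.lt_or_ge (2*j) m with h | h
    · rw [show m - 2*j = (m+1-2*(j+1))+1 from by omega]
      push_cast
      ring
    · have hz : (m - j).choose (j+1) = 0 := Nat.choose_eq_zero_of_lt (by omega)
      have hz2 : m+1-2*(j+1) = 0 := by omega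
      rw [hz, hz2]
      push_cast
      ring
  rw [hsum, Finset.sum_sub_distrib]
  simp [pow_succ]
  ring

lemma pairW (m : ℕ) (a b : ℝ) :
    a^(m+2) + b^(m+2) = Wfn (a+b) (a*b) (m+2) - (a*b) * Wfn (a+b) (a*b) m := by
  induction m using Nat.twoStepInduction with
  | zero =>
    simp [Wfn, Finset.sum_range_succ]
    ring
  | one =>
    simp [Wfn, Finset.sum_range_succ]
    ring
  | more m ih2 ih1 =>
    have hx : a^(m+2+2) + b^(m+2+2)
        = (a+b) * (a^(m+1+2) + b^(m+1+2)) - (a*b) * (a^(m+2) + b^(m+2)) := by ring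
    rw [hx, ih1, ih2, Wrec (m+2), Wrec m]
    ring

lemma coeff_eq (n i : ℕ) (hi : i < n) :
    (2*(n:ℝ)-1)/(2*(i:ℝ)+1) * ((n+i-1).choose (2*i) : ℝ)
      = ((n+i).choose (2*i+1) : ℝ) + ((n+i-1).choose (2*i+1) : ℝ) := by
  have h1 : (n+i) * (n+i-1).choose (2*i) = (n+i).choose (2*i+1) * (2*i+1) := by
    have := Nat.add_one_mul_choose_eq (n+i-1) (2*i)
    rwa [show n+i-1+1 = n+i from by omega] at this
  have h2 : (n+i-1).choose (2*i+1) * (2*i+1) = (n+i-1).choose (2*i) * (n-(i+1)) := by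
    have := Nat.choose_succ_right_eq (n+i-1) (2*i)
    rwa [show n+i-1-(2*i) = n-(i+1) from by omega] at this
  have H1 := congrArg (Nat.cast : ℕ → ℝ) h1
  have H2 := congrArg (Nat.cast : ℕ → ℝ) h2
  push_cast [Nat.cast_sub (by omega : i+1 ≤ n)] at H1 H2
  rw [div_mul_eq_mul_div, div_eq_iff (by positivity)]
  linear_combination H1 - H2

lemma hW1 (k : ℕ) (t : ℝ) :
    Wfn (1-t) (-t) (2*k+3)
      = ∑ i ∈ Finset.range (k+2), (((k+2+i).choose (2*i+1) : ℝ)) * t^(k+1-i) * (1-t)^(2*i+1) := by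
  unfold Wfn
  rw [← Finset.sum_subset (Finset.range_subset_range.2 (by omega : k+2 ≤ 2*k+3+1))
    (by
      intro j hj hj2
      simp only [Finset.mem_range] at hj hj2
      rw [Nat.choose_eq_zero_of_lt (by omega : 2*k+3-j < j)]
      simp)]
  rw [← Finset.sum_range_reflect]
  refine Finset.sum_congr rfl ?_
  intro i hi
  have hik : i ≤ k+1 := by
    have := Finset.mem_range.mp hi; omega
  rw [show k+2-1-i = k+1-i from by omega]
  have hc : (2*k+3 - (k+1-i)).choose (k+1-i) = (k+2+i).choose (2*i+1) := by
    rw [show 2*k+3-(k+1-i) = k+2+i from by omega,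
        show k+1-i = (k+2+i) - (2*i+1) from by omega,
        Nat.choose_symm (by omega)]
  rw [hc, show 2*k+3 - 2*(k+1-i) = 2*i+1 from by omega]
  have hsgn : (-1:ℝ)^(k+1-i) * (-1:ℝ)^(k+1-i) = 1 := by
    rw [← pow_add]
    exact Even.neg_one_pow ⟨k+1-i, rfl⟩
  rw [neg_pow]
  linear_combination (((k+2+i).choose (2*i+1) : ℝ) * (1-t)^(2*i+1) * t^(k+1-i)) * hsgn

lemma hW2 (k : ℕ) (t : ℝ) :
    t * Wfn (1-t) (-t) (2*k+1)
      = ∑ i ∈ Finset.range (k+2), (((k+1+i).choose (2*i+1) : ℝ)) * t^(k+1-i) * (1-t)^(2*i+1) := by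
  rw [Finset.sum_range_succ, Nat.choose_eq_zero_of_lt (by omega : k+1+(k+1) < 2*(k+1)+1)]
  unfold Wfn
  rw [← Finset.sum_subset (Finset.range_subset_range.2 (by omega : k+1 ≤ 2*k+1+1))
    (by
      intro j hj hj2
      simp only [Finset.mem_range] at hj hj2
      rw [Nat.choose_eq_zero_of_lt (by omega : 2*k+1-j < j)]
      simp)]
  rw [← Finset.sum_range_reflect, Finset.mul_sum]
  simp only [Nat.cast_zero, zero_mul]
  rw [add_zero]
  refine Finset.sum_congr rfl ?_
  intro i hi
  have hik : i ≤ k := by have := Finset.mem_range.mp hi; omega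
  rw [show k+1-1-i = k-i from by omega]
  have hc : (2*k+1 - (k-i)).choose (k-i) = (k+1+i).choose (2*i+1) := by
    rw [show 2*k+1-(k-i) = k+1+i from by omega,
        show k-i = (k+1+i) - (2*i+1) from by omega,
        Nat.choose_symm (by omega)]
  rw [hc, show 2*k+1 - 2*(k-i) = 2*i+1 from by omega,
      show k+1-i = (k-i)+1 from by omega]
  have hsgn : (-1:ℝ)^(k-i) * (-1:ℝ)^(k-i) = 1 := by
    rw [← pow_add]
    exact Even.neg_one_pow ⟨k-i, rfl⟩
  rw [neg_pow, pow_succ]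
  linear_combination (((k+1+i).choose (2*i+1) : ℝ) * (1-t)^(2*i+1) * t^(k-i) * t) * hsgn

theorem stmt_7 (n : ℕ) (hn : 1 ≤ n) (t : ℝ) :
    t ^ (2 * n - 1) +
      ∑ i ∈ Finset.range n,
        ((2 * (n : ℝ) - 1) / (2 * (i : ℝ) + 1)) * ((n + i - 1).choose (2 * i) : ℝ) *
          t ^ (n - i - 1) * (1 - t) ^ (2 * i + 1) = 1 := by
  rcases Nat.lt_or_ge n 2 with h | h
  · obtain rfl : n = 1 := by omega
    norm_num [Finset.sum_range_one]
  · obtain ⟨k, rfl⟩ : ∃ k, n = k+2 := ⟨n-2, by omega⟩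
    have hp := pairW (2*k+1) 1 (-t)
    rw [show (1:ℝ) + -t = 1 - t from by ring, show (1:ℝ) * -t = -t from by ring,
        show 2*k+1+2 = 2*k+3 from by omega, one_pow,
        show ((-t):ℝ)^(2*k+3) = -t^(2*k+3) from Odd.neg_pow ⟨k+1, by ring⟩ t] at hp
    have hS : ∑ i ∈ Finset.range (k+2),
        ((2 * ((k+2 : ℕ) : ℝ) - 1) / (2 * (i : ℝ) + 1)) * (((k+2) + i - 1).choose (2 * i) : ℝ) *
          t ^ ((k+2) - i - 1) * (1 - t) ^ (2 * i + 1)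
        = ∑ i ∈ Finset.range (k+2),
          ((((k+2+i).choose (2*i+1) : ℝ)) * t^(k+1-i) * (1-t)^(2*i+1)
            + (((k+1+i).choose (2*i+1) : ℝ)) * t^(k+1-i) * (1-t)^(2*i+1)) := by
      refine Finset.sum_congr rfl ?_
      intro i hi
      have hik : i < k+2 := Finset.mem_range.mp hi
      rw [show (k+2) - i - 1 = k+1-i from by omega, coeff_eq (k+2) i hik]
      rw [show (k+2) + i = k+2+i from rfl, show (k+2) + i - 1 = k+1+i from by omega]
      ring
    rw [show 2*(k+2)-1 = 2*k+3 from by omega, hS, Finset.sum_add_distrib, ← hW1, ← hW2]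
    linarith [hp]
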